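/- If G is a finite solvable group, then the prime index graph Π(G) is connected. -/

import Mathlib

/-!
A nontrivial finite solvable group has a nontrivial abelian quotient, hence a subgroup of prime
index. Applied inside a nontrivial subgroup `H`, this gives a neighbour of `H` in `Π(G)` strictly
below it, so descending through the (finite) subgroup lattice joins every subgroup to `⊥`.
-/

/-- The prime index graph of a group: vertices are subgroups, two distinct
subgroups are adjacent iff one is contained in the other with prime index. -/
def primeIndexGraph (G : Type*) [Group G] : SimpleGraph (Subgroup G) :=
  SimpleGraph.fromRel (fun H K => H ≤ K ∧ (H.relIndex K).Prime)

theorem Subgroup.index_prime_of_isCoatom {A : Type*} [CommGroup A] {M : Subgroup A}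
    (hM : IsCoatom M) : M.index.Prime := by
  have : IsSimpleOrder (Subgroup (A ⧸ M)) :=
    (OrderIso.isSimpleOrder_iff (β := Set.Ici M) (QuotientGroup.comapMk'OrderIso M)).mpr
      (Set.isSimpleOrder_Ici_iff_isCoatom.mpr hM)
  have : Nontrivial (A ⧸ M) := Subgroup.nontrivial_iff.mp inferInstance
  have : IsSimpleGroup (A ⧸ M) := ⟨fun H _ ↦ IsSimpleOrder.eq_bot_or_eq_top H⟩
  exact CommGroup.is_simple_iff_prime_card.mp this

theorem CommGroup.exists_subgroup_index_prime (A : Type*) [CommGroup A] [Finite A] [Nontrivial A] :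
    ∃ M : Subgroup A, M.index.Prime := by
  obtain ⟨M, hM, -⟩ :=
    (IsCoatomic.eq_top_or_exists_le_coatom (⊥ : Subgroup A)).resolve_left bot_ne_top
  exact ⟨M, Subgroup.index_prime_of_isCoatom hM⟩

theorem Group.IsSolvable.exists_subgroup_index_prime (G : Type*) [Group G] [Finite G]
    [Nontrivial G] [Group.IsSolvable G] : ∃ M : Subgroup G, M.index.Prime := by
  have : Nontrivial (Abelianization G) := by
    rw [← Finite.one_lt_card_iff_nontrivial]
    exact Subgroup.one_lt_index_of_ne_top (commutator_lt_top_of_nontrivial G).ne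
  obtain ⟨M, hM⟩ := CommGroup.exists_subgroup_index_prime (Abelianization G)
  exact ⟨M.comap Abelianization.of,
    by rwa [Subgroup.index_comap_of_surjective (f := Abelianization.of) M
      (QuotientGroup.mk'_surjective _)]⟩

namespace primeIndexGraph

variable {G : Type*} [Group G]

theorem adj_of_le {H K : Subgroup G} (hle : H ≤ K) (hp : (H.relIndex K).Prime) :
    (primeIndexGraph G).Adj H K :=
  ⟨fun h ↦ hp.ne_one (h ▸ Subgroup.relIndex_self H), Or.inl ⟨hle, hp⟩⟩

theorem exists_adj_lt [Finite G] [Group.IsSolvable G] {H : Subgroup G} (hH : H ≠ ⊥) :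
    ∃ K < H, (primeIndexGraph G).Adj K H := by
  have : Nontrivial H := H.nontrivial_iff_ne_bot.mpr hH
  obtain ⟨M, hM⟩ := Group.IsSolvable.exists_subgroup_index_prime H
  have hrel : (M.map H.subtype).relIndex H = M.index := by
    rw [Subgroup.relIndex, ← Subgroup.comap_subtype,
      Subgroup.comap_map_eq_self_of_injective H.subtype_injective]
  have hadj : (primeIndexGraph G).Adj (M.map H.subtype) H :=
    adj_of_le (Subgroup.map_subtype_le M) (hrel ▸ hM)
  exact ⟨_, (Subgroup.map_subtype_le M).lt_of_ne hadj.ne, hadj⟩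

theorem reachable_bot [Finite G] [Group.IsSolvable G] (H : Subgroup G) :
    (primeIndexGraph G).Reachable ⊥ H := by
  induction H using WellFoundedLT.induction with
  | ind H ih =>
    rcases eq_or_ne H ⊥ with rfl | hH
    · rfl
    · obtain ⟨K, hKH, hadj⟩ := exists_adj_lt hH
      exact (ih K hKH).trans hadj.reachable

end primeIndexGraph

theorem primeIndexGraph_solvable_connected (G : Type*) [Group G] [Fintype G]
    (h : IsSolvable G) : (primeIndexGraph G).Connected :=
  have : Group.IsSolvable G := h
  (SimpleGraph.connected_iff_exists_forall_reachable _).mpr ⟨⊥, primeIndexGraph.reachable_bot⟩
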